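/- Let F/Q be a Galois extension of prime-power degree p^n (p odd) in which p is totally ramified with unique prime 𝔭. If λ, μ ∈ O_F satisfy λ + μ = 1 and both λ and μ are units, then p = 3. -/

import Mathlib

/-!
Let `u` be a unit of `𝓞 F`. Since `p` is totally ramified, `𝓞 F ⧸ 𝓟` has `p` elements, so every
residue class contains a rational integer; as `𝓟` is the only prime above `p`, it is Galois stable,
and therefore every Galois conjugate of `u` is congruent to `u` modulo `𝓟`. Hence
`±1 = N(u) = ∏ σ u ≡ u ^ [F : ℚ] = u ^ (p ^ n) ≡ u`, the last step being Fermat's little theorem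
in `𝓞 F ⧸ 𝓟 ≅ 𝔽_p`. Reducing `λ + μ = 1` modulo `𝓟` then gives `±1 ± 1 = 1` in characteristic `p`,
which forces `p ∣ 3`.
-/

open NumberField

section PrimeCard

variable {R : Type*} [Ring R] {p : ℕ} [Fact p.Prime]

theorem exists_ringEquiv_zmod_of_natCard_eq_prime (hR : Nat.card R = p) :
    Nonempty (ZMod p ≃+* R) := by
  have : Finite R := Nat.finite_of_card_ne_zero (hR ▸ NeZero.ne p)
  have := Fintype.ofFinite R
  exact ⟨ZMod.ringEquivOfPrime R Fact.out (Nat.card_eq_fintype_card (α := R) ▸ hR)⟩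

theorem charP_of_natCard_eq_prime (hR : Nat.card R = p) : CharP R p := by
  have : Finite R := Nat.finite_of_card_ne_zero (hR ▸ NeZero.ne p)
  have := Fintype.ofFinite R
  exact charP_of_card_eq_prime (Nat.card_eq_fintype_card (α := R) ▸ hR)

theorem intCast_surjective_of_natCard_eq_prime (hR : Nat.card R = p) :
    Function.Surjective (Int.cast : ℤ → R) := by
  obtain ⟨e⟩ := exists_ringEquiv_zmod_of_natCard_eq_prime hR
  intro x
  obtain ⟨m, hm⟩ := ZMod.intCast_surjective (e.symm x)
  exact ⟨m, by rw [← map_intCast e, hm, e.apply_symm_apply]⟩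

theorem pow_prime_pow_of_natCard_eq_prime (hR : Nat.card R = p) (x : R) (k : ℕ) :
    x ^ p ^ k = x := by
  obtain ⟨e⟩ := exists_ringEquiv_zmod_of_natCard_eq_prime hR
  rw [← e.apply_symm_apply x, ← map_pow, ZMod.pow_card_pow]

end PrimeCard

theorem CharP.eq_three_of_add_eq_one {R : Type*} [CommRing R] (p : ℕ) [CharP R p]
    (hp : p.Prime) {a b : R} (ha : a = 1 ∨ a = -1) (hb : b = 1 ∨ b = -1) (hab : a + b = 1) :
    p = 3 := by
  have h3 : ((3 : ℕ) : R) = 0 := by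
    rcases ha with rfl | rfl <;> rcases hb with rfl | rfl <;> push_cast
    · linear_combination 3 * hab
    · linear_combination -3 * hab
    · linear_combination -3 * hab
    · linear_combination -hab
  exact (Nat.prime_dvd_prime_iff_eq hp Nat.prime_three).1 ((CharP.cast_eq_zero_iff R p 3).1 h3)

namespace Ideal

theorem le_comap_of_span_singleton_eq_pow {R : Type*} [CommRing R] {P : Ideal R} [P.IsPrime]
    {a : R} {e : ℕ} (he : e ≠ 0) (h : span {a} = P ^ e) (f : R →+* R) (hf : f a = a) :
    P ≤ P.comap f := by
  have haP : a ∈ P := pow_le_self he (h ▸ mem_span_singleton_self a)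
  refine IsPrime.le_of_pow_le (n := e) ?_
  rw [← h, span_singleton_le_iff_mem, mem_comap, hf]
  exact haP

theorem Quotient.mk_apply_eq_of_le_comap {R : Type*} [CommRing R] {P : Ideal R}
    (hP : Function.Surjective (Int.cast : ℤ → R ⧸ P)) (f : R →+* R) (hf : P ≤ P.comap f)
    (x : R) : Quotient.mk P (f x) = Quotient.mk P x := by
  obtain ⟨m, hm⟩ := hP (Quotient.mk P x)
  have hxm : x - m ∈ P := by
    rw [← Quotient.eq_zero_iff_mem, map_sub, map_intCast, hm, sub_self]
  have hfxm := hf hxm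
  rwa [mem_comap, map_sub, map_intCast, ← Quotient.eq_zero_iff_mem, map_sub, map_intCast, hm,
    sub_eq_zero] at hfxm

end Ideal

open Ideal Module

namespace NumberField

variable {K : Type*} [Field K] [NumberField K] {P : Ideal (𝓞 K)} {p : ℕ}

theorem natCard_quotient_eq_of_span_natCast_eq_pow_finrank
    (h : span {(p : 𝓞 K)} = P ^ finrank ℚ K) : Nat.card (𝓞 K ⧸ P) = p := by
  have hnorm := absNorm_span_natCast (S := 𝓞 K) p
  rw [h, map_pow, RingOfIntegers.rank] at hnorm
  rw [← Submodule.cardQuot_apply, ← absNorm_apply]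
  exact Nat.pow_left_injective finrank_pos.ne' hnorm

theorem exists_intCast_eq_norm_and_mk_pow_finrank_eq [IsGalois ℚ K]
    (hgal : ∀ (σ : Gal(K/ℚ)) (x : 𝓞 K),
      Ideal.Quotient.mk P (galRestrict ℤ ℚ K (𝓞 K) σ x) = Ideal.Quotient.mk P x)
    (x : 𝓞 K) :
    ∃ N : ℤ, (N : ℚ) = Algebra.norm ℚ (x : K) ∧ Ideal.Quotient.mk P x ^ finrank ℚ K = N := by
  have hprod := congrArg (Ideal.Quotient.mk P) (prod_galRestrict_eq_norm ℤ ℚ K (𝓞 K) x)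
  rw [map_prod, Finset.prod_congr rfl fun σ _ ↦ hgal σ x, Finset.prod_const, Finset.card_univ,
    ← Nat.card_eq_fintype_card, IsGalois.card_aut_eq_finrank, algebraMap_int_eq,
    eq_intCast] at hprod
  exact ⟨_, (eq_intCast (algebraMap ℤ ℚ) _).symm.trans (IsIntegralClosure.algebraMap_mk' _ _ _),
    hprod⟩

theorem quotient_mk_unit_eq_one_or_neg_one [IsGalois ℚ K] [Fact p.Prime] [P.IsPrime] {n : ℕ}
    (hdeg : finrank ℚ K = p ^ n) (h : span {(p : 𝓞 K)} = P ^ finrank ℚ K) (u : (𝓞 K)ˣ) :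
    Ideal.Quotient.mk P u = 1 ∨ Ideal.Quotient.mk P u = -1 := by
  have hcard := natCard_quotient_eq_of_span_natCast_eq_pow_finrank h
  have hgal (σ : Gal(K/ℚ)) (x : 𝓞 K) :
      Ideal.Quotient.mk P (galRestrict ℤ ℚ K (𝓞 K) σ x) = Ideal.Quotient.mk P x :=
    Quotient.mk_apply_eq_of_le_comap (intCast_surjective_of_natCard_eq_prime hcard)
      (galRestrict ℤ ℚ K (𝓞 K) σ : 𝓞 K →+* 𝓞 K)
      (le_comap_of_span_singleton_eq_pow finrank_pos.ne' h _ (map_natCast _ p)) x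
  obtain ⟨N, hN, hmk⟩ := exists_intCast_eq_norm_and_mk_pow_finrank_eq hgal u
  have hN1 : |N| = 1 := by exact_mod_cast hN ▸ Units.norm K u
  rw [hdeg, pow_prime_pow_of_natCard_eq_prime hcard] at hmk
  rcases abs_eq zero_le_one |>.1 hN1 with rfl | rfl
  · exact Or.inl (by simpa using hmk)
  · exact Or.inr (by simpa using hmk)

end NumberField

theorem stmt17_general (p n : ℕ) (hp : p.Prime)
    (F : Type*) [Field F] [NumberField F] [IsGalois ℚ F]
    (hdeg : Module.finrank ℚ F = p ^ n)
    (P : Ideal (𝓞 F)) (hP : P.IsPrime)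
    (hram : Ideal.span {(p : 𝓞 F)} = P ^ (p ^ n))
    (lam mu : (𝓞 F)ˣ) (hsum : (lam : 𝓞 F) + (mu : 𝓞 F) = 1) :
    p = 3 := by
  have : Fact p.Prime := ⟨hp⟩
  rw [← hdeg] at hram
  have := charP_of_natCard_eq_prime (natCard_quotient_eq_of_span_natCast_eq_pow_finrank hram)
  refine CharP.eq_three_of_add_eq_one (R := 𝓞 F ⧸ P) p hp
    (quotient_mk_unit_eq_one_or_neg_one hdeg hram lam)
    (quotient_mk_unit_eq_one_or_neg_one hdeg hram mu) ?_
  rw [← map_add, hsum, map_one]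

/-- F/ℚ Galois of degree p^n (p odd) with p totally ramified: if units
λ, μ ∈ O_Fˣ satisfy λ + μ = 1 then p = 3. -/
theorem stmt17 (p n : ℕ) (hp : p.Prime) (hodd : Odd p) (hn : 1 ≤ n)
    (F : Type*) [Field F] [NumberField F] [IsGalois ℚ F]
    (hdeg : Module.finrank ℚ F = p ^ n)
    (P : Ideal (𝓞 F)) (hP : P.IsPrime)
    (hram : Ideal.span {(p : 𝓞 F)} = P ^ (p ^ n))
    (lam mu : (𝓞 F)ˣ) (hsum : (lam : 𝓞 F) + (mu : 𝓞 F) = 1) :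
    p = 3 :=
  stmt17_general p n hp F hdeg P hP hram lam mu hsum
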